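/- arXiv:2104.04220 — 3 statements merged into one kernel-verified Lean document; each statement's English description precedes it below -/
import Mathlib

section
/- For n ≥ 1, the number of run-sorted permutations of [n] with exactly k descents (indexed so that the descent-set generating polynomial is A_n) satisfies the recursion A_n(t) = A_{n-1}(t) + t·∑_{i=1}^{n-2} C(n-2, i-1) A_i(t), where A_n(t) = ∑_{σ ∈ RSP(n)} t^{des(σ)} and A_1(t) = 1. -/
/-- Lexicographic (≤) comparison of lists of naturals, as a `Bool`. -/
def lexLe : List ℕ → List ℕ → Bool
  | [], _ => true
  | _ :: _, [] => false
  | a :: as, b :: bs => decide (a < b) || (a == b && lexLe as bs)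

/-- Split a word into its maximal (weakly) increasing runs. -/
def splitRuns : List ℕ → List (List ℕ)
  | [] => []
  | [x] => [[x]]
  | x :: y :: rest =>
    match splitRuns (y :: rest) with
    | [] => [[x]]
    | r :: rs => if x ≤ y then (x :: r) :: rs else [x] :: r :: rs

/-- Rearrange the maximal increasing runs of a word in lexicographic order. -/
def runsort (w : List ℕ) : List ℕ := ((splitRuns w).mergeSort lexLe).flatten

/-- A word is run-sorted if its runs already appear in lexicographic order. -/
def IsRunSorted (w : List ℕ) : Prop := runsort w = w

instance : DecidablePred IsRunSorted := fun w => inferInstanceAs (Decidable (runsort w = w))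

/-- The number of descents of a word: positions k (0-indexed) with w(k) > w(k+1). -/
def des (w : List ℕ) : ℕ := ((w.zip w.tail).filter fun p => decide (p.2 < p.1)).length

/-- The one-line notation word (with values 1,…,n) of a permutation of `Fin n`. -/
def permWord {n : ℕ} (σ : Equiv.Perm (Fin n)) : List ℕ := List.ofFn fun i => (σ i : ℕ) + 1

/-- The descent generating polynomial of run-sorted permutations of `[n]`. -/
noncomputable def A (n : ℕ) : Polynomial ℝ :=
  ∑ σ ∈ Finset.univ.filter (fun σ : Equiv.Perm (Fin n) => IsRunSorted (permWord σ)),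
    Polynomial.X ^ des (permWord σ)

/-!
A run-sorted word with distinct letters starts with its smallest letter, so for a run-sorted
arrangement `w` of `{1, …, n}` with a descent, the first run is the increasing arrangement of some
`C ∋ 1` and the rest is a run-sorted arrangement of `W = {1, …, n} \ C`, with one descent fewer.
Conversely, for `W ⊆ {2, …, n}` with `min W < max C`, i.e. unless `W` is a top segment
`{n - i + 1, …, n}`, sorted `C` followed by a run-sorted arrangement of `W` is run-sorted with first
run `C`. The descent polynomial of run-sorted arrangements of a set depends only on its
size (relabel by ranks), so `A n = 1 + t ∑_{i<n} (C(n-1,i) - 1) A i`, and Pascal's rule turns this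
into the stated recursion.
-/

lemma List.IsChain.le_of_mem_cons {α : Type*} [Preorder α] {a x : α} {l : List α}
    (h : (a :: l).IsChain (· ≤ ·)) (hx : x ∈ a :: l) : a ≤ x :=
  (List.mem_cons.1 hx).elim (fun h => h.ge) fun hx =>
    (List.pairwise_cons.1 (List.isChain_iff_pairwise.1 h)).1 x hx

lemma List.IsChain.le_of_mem_getLast? {α : Type*} [Preorder α] {x y : α} {l : List α}
    (h : l.IsChain (· ≤ ·)) (hx : x ∈ l.getLast?) (hy : y ∈ l) : y ≤ x := by
  obtain ⟨l, rfl⟩ := List.getLast?_eq_some_iff.1 hx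
  rw [List.isChain_iff_pairwise, List.pairwise_append] at h
  rcases List.mem_append.1 hy with hy | hy
  · exact h.2.2 y hy x (List.mem_singleton_self x)
  · exact (List.mem_singleton.1 hy).le

lemma List.eq_of_perm_of_flatten_eq {α : Type*} {R S : List (List α)} (hR : [] ∉ R)
    (hnd : R.flatten.Nodup) (hp : S.Perm R) (hf : S.flatten = R.flatten) : S = R := by
  induction R generalizing S with
  | nil => exact hp.eq_nil
  | cons r R ih =>
    obtain ⟨s, S, rfl⟩ := List.exists_cons_of_length_eq_add_one hp.length_eq
    have hs : s ∈ r :: R := hp.subset (List.mem_cons_self ..)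
    simp only [List.mem_cons, not_or] at hR
    obtain ⟨hr, hR'⟩ := hR
    rw [List.flatten_cons, List.nodup_append] at hnd
    have hsne : s ≠ [] := by
      rintro rfl
      rcases List.mem_cons.1 hs with h | h
      exacts [hr h, hR' h]
    -- the first letter of the word lies in `s` and in `r`, so `s` is not a later block
    have hsr : s = r := by
      obtain ⟨a, s', rfl⟩ := List.exists_cons_of_ne_nil hsne
      obtain ⟨b, r', rfl⟩ := List.exists_cons_of_ne_nil (Ne.symm hr)
      rcases List.mem_cons.1 hs with h | h
      · exact h
      · simp only [List.flatten_cons, List.cons_append, List.cons.injEq] at hf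
        exact (hnd.2.2 b (by simp) a (List.mem_flatten_of_mem h (by simp)) hf.1.symm).elim
    subst hsr
    rw [List.flatten_cons, List.flatten_cons, List.append_cancel_left_eq] at hf
    rw [ih hR' hnd.2.1 hp.cons_inv hf]

lemma Set.InjOn.list_map {α β : Type*} {f : α → β} {s : Set α} (hf : s.InjOn f) :
    {l : List α | ∀ x ∈ l, x ∈ s}.InjOn (List.map f) := by
  intro l₁ h₁ l₂ h₂ h
  induction l₁ generalizing l₂ with
  | nil => exact (List.map_eq_nil_iff.1 h.symm).symm
  | cons a l ih =>
    cases l₂ with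
    | nil => simp at h
    | cons b l' =>
      simp only [List.map_cons, List.cons.injEq] at h
      simp only [Set.mem_ofPred_eq, List.forall_mem_cons] at h₁ h₂
      rw [hf h₁.1 h₂.1 h.1, ih h₁.2 h₂.2 h.2]

@[simp] lemma splitRuns_nil : splitRuns [] = [] := rfl

lemma splitRuns_cons (x : ℕ) (l : List ℕ) : ∃ r rs, splitRuns (x :: l) = (x :: r) :: rs := by
  induction l generalizing x with
  | nil => exact ⟨[], [], rfl⟩
  | cons y t ih =>
    obtain ⟨r, rs, h⟩ := ih y
    by_cases hxy : x ≤ y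
    · exact ⟨y :: r, rs, by simp [splitRuns, h, hxy]⟩
    · exact ⟨[], (y :: r) :: rs, by simp [splitRuns, h, hxy]⟩

lemma splitRuns_cons_cons_of_le {x y : ℕ} (hxy : x ≤ y) {l r : List ℕ} {rs : List (List ℕ)}
    (h : splitRuns (y :: l) = r :: rs) : splitRuns (x :: y :: l) = (x :: r) :: rs := by
  simp [splitRuns, h, hxy]

lemma splitRuns_cons_cons_of_lt {x y : ℕ} (hxy : y < x) (l : List ℕ) :
    splitRuns (x :: y :: l) = [x] :: splitRuns (y :: l) := by
  obtain ⟨r, rs, h⟩ := splitRuns_cons y l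
  simp [splitRuns, h, hxy.not_ge]

@[simp] lemma flatten_splitRuns : ∀ w : List ℕ, (splitRuns w).flatten = w
  | [] => rfl
  | [_] => rfl
  | x :: y :: t => by
    have ih := flatten_splitRuns (y :: t)
    obtain ⟨r, rs, h⟩ := splitRuns_cons y t
    rcases le_or_gt x y with hxy | hxy
    · rw [h] at ih
      simpa [splitRuns_cons_cons_of_le hxy h] using ih
    · simp [splitRuns_cons_cons_of_lt hxy, ih]

def IsRunDecomposition (R : List (List ℕ)) : Prop :=
  (∀ r ∈ R, r ≠ [] ∧ r.IsChain (· ≤ ·)) ∧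
    R.IsChain fun r s => ∀ x ∈ r.getLast?, ∀ y ∈ s.head?, y < x

lemma IsRunDecomposition.cons {u : List ℕ} {R : List (List ℕ)} (hu : u ≠ [])
    (hc : u.IsChain (· ≤ ·)) (h : ∀ x ∈ u.getLast?, ∀ y ∈ R.flatten.head?, y < x)
    (hR : IsRunDecomposition R) : IsRunDecomposition (u :: R) := by
  refine ⟨List.forall_mem_cons.2 ⟨⟨hu, hc⟩, hR.1⟩, hR.2.cons fun s hs => ?_⟩
  obtain ⟨R', rfl⟩ : ∃ R', R = s :: R' := ⟨R.tail, (List.eq_cons_of_mem_head? hs)⟩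
  simpa [List.head?_append_of_ne_nil _ (hR.1 s (by simp)).1] using h

lemma isRunDecomposition_splitRuns : ∀ w : List ℕ, IsRunDecomposition (splitRuns w)
  | [] => ⟨by simp [splitRuns], .nil⟩
  | [x] => ⟨by simp [splitRuns], .singleton _⟩
  | x :: y :: t => by
    have ih := isRunDecomposition_splitRuns (y :: t)
    obtain ⟨r, rs, h⟩ := splitRuns_cons y t
    rcases le_or_gt x y with hxy | hxy
    · rw [h] at ih
      rw [splitRuns_cons_cons_of_le hxy h]
      obtain ⟨hr, hrs⟩ := List.forall_mem_cons.1 ih.1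
      refine ⟨List.forall_mem_cons.2 ⟨⟨by simp, hr.2.cons_cons hxy⟩, hrs⟩, ?_⟩
      exact ih.2.imp_head fun hz => by simpa using hz
    · rw [splitRuns_cons_cons_of_lt hxy]
      exact ih.cons (by simp) (.singleton _) (by simpa using hxy)

lemma splitRuns_append {u v : List ℕ} (hu : u ≠ []) (hc : u.IsChain (· ≤ ·))
    (h : ∀ x ∈ u.getLast?, ∀ y ∈ v.head?, y < x) : splitRuns (u ++ v) = u :: splitRuns v := by
  match u, v with
  | [x], [] => rfl
  | [x], y :: v => simpa using splitRuns_cons_cons_of_lt (by simpa using h) v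
  | x :: y :: l, v =>
    have ih := splitRuns_append (u := y :: l) (by simp) hc.tail (by simpa using h)
    exact splitRuns_cons_cons_of_le (List.isChain_cons_cons.1 hc).1 ih

lemma IsRunDecomposition.splitRuns_flatten {R : List (List ℕ)} (hR : IsRunDecomposition R) :
    splitRuns R.flatten = R := by
  induction R with
  | nil => rfl
  | cons u R ih =>
    obtain ⟨⟨hu, hc⟩, hR1⟩ := List.forall_mem_cons.1 hR.1
    rw [List.flatten_cons, splitRuns_append hu hc, ih ⟨hR1, hR.2.tail⟩]
    cases R with
    | nil => simp
    | cons s R =>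
      simpa [List.head?_append_of_ne_nil _ (hR1 s (by simp)).1] using hR.2.rel_head? (by simp)

lemma des_cons_cons (x y : ℕ) (l : List ℕ) :
    des (x :: y :: l) = (if y < x then 1 else 0) + des (y :: l) := by
  simp only [des, List.tail_cons, List.zip_cons_cons, List.filter_cons]
  split <;> rename_i h <;> simp at h <;> simp [h, Nat.add_comm]

lemma des_eq_zero_iff : ∀ {w : List ℕ}, des w = 0 ↔ w.IsChain (· ≤ ·)
  | [] => by simp [des]
  | [_] => by simp [des]
  | x :: y :: t => by
    rw [des_cons_cons, List.isChain_cons_cons, ← des_eq_zero_iff]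
    split_ifs <;> omega

lemma des_add_one_eq_length_splitRuns (x : ℕ) (l : List ℕ) :
    des (x :: l) + 1 = (splitRuns (x :: l)).length := by
  induction l generalizing x with
  | nil => rfl
  | cons y t ih =>
    obtain ⟨r, rs, h⟩ := splitRuns_cons y t
    rw [des_cons_cons]
    rcases le_or_gt x y with hxy | hxy
    · rw [splitRuns_cons_cons_of_le hxy h, if_neg hxy.not_gt, zero_add, ih, h]; rfl
    · rw [splitRuns_cons_cons_of_lt hxy, if_pos hxy, List.length_cons, ← ih]; omega

lemma lexLe_trans : ∀ {a b c : List ℕ}, lexLe a b → lexLe b c → lexLe a c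
  | [], _, _, _, _ => rfl
  | _ :: _, [], _, hab, _ => by simp [lexLe] at hab
  | _ :: _, _ :: _, [], _, hbc => by simp [lexLe] at hbc
  | x :: as, y :: bs, z :: cs, hab, hbc => by
    simp only [lexLe, Bool.or_eq_true, decide_eq_true_eq, Bool.and_eq_true, beq_iff_eq] at *
    rcases hab with h1 | ⟨rfl, h1⟩ <;> rcases hbc with h2 | ⟨rfl, h2⟩
    · exact Or.inl (h1.trans h2)
    · exact Or.inl h1
    · exact Or.inl h2
    · exact Or.inr ⟨rfl, lexLe_trans h1 h2⟩

lemma lexLe_total : ∀ a b : List ℕ, (lexLe a b || lexLe b a) = true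
  | [], _ => rfl
  | _ :: _, [] => rfl
  | x :: as, y :: bs => by
    have := lexLe_total as bs
    simp only [lexLe, Bool.or_eq_true, decide_eq_true_eq, Bool.and_eq_true, beq_iff_eq] at *
    rcases lt_trichotomy x y with h | rfl | h <;> tauto

lemma lexLe_cons_cons_of_lt {a b : ℕ} (h : a < b) (as bs : List ℕ) :
    lexLe (a :: as) (b :: bs) := by
  simp [lexLe, h]

lemma le_of_lexLe_cons_cons {a b : ℕ} {as bs : List ℕ} (h : lexLe (a :: as) (b :: bs)) :
    a ≤ b := by
  simp only [lexLe, Bool.or_eq_true, decide_eq_true_eq, Bool.and_eq_true, beq_iff_eq] at h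
  omega

lemma isRunSorted_iff_pairwise {w : List ℕ} (hw : w.Nodup) :
    IsRunSorted w ↔ (splitRuns w).Pairwise fun r s => lexLe r s := by
  constructor
  · intro h
    have hsorted : (splitRuns w).mergeSort lexLe = splitRuns w :=
      List.eq_of_perm_of_flatten_eq (fun h => (isRunDecomposition_splitRuns w).1 _ h |>.1 rfl)
        (by simpa using hw) (List.mergeSort_perm _ _) (h.trans (flatten_splitRuns w).symm)
    simpa [hsorted] using
      List.pairwise_mergeSort (le := lexLe) (fun _ _ _ => lexLe_trans) lexLe_total (splitRuns w)
  · intro h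
    rw [IsRunSorted, runsort, List.mergeSort_of_pairwise h, flatten_splitRuns]

lemma head_le_of_isRunSorted {a : ℕ} {t : List ℕ} (hnd : (a :: t).Nodup)
    (hrs : IsRunSorted (a :: t)) {x : ℕ} (hx : x ∈ a :: t) : a ≤ x := by
  obtain ⟨r, rs, hsp⟩ := splitRuns_cons a t
  have hruns := (isRunDecomposition_splitRuns (a :: t)).1
  have hpw := (isRunSorted_iff_pairwise hnd).1 hrs
  rw [hsp] at hruns hpw
  rw [← flatten_splitRuns (a :: t), hsp, List.mem_flatten] at hx
  obtain ⟨s, hs, hxs⟩ := hx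
  obtain ⟨b, s', rfl⟩ := List.exists_cons_of_ne_nil (hruns s hs).1
  calc a ≤ b := by
        rcases List.mem_cons.1 hs with h | h
        · exact (List.cons.inj h).1.ge
        · exact le_of_lexLe_cons_cons (List.pairwise_cons.1 hpw |>.1 _ h)
    _ ≤ x := (hruns _ hs).2.le_of_mem_cons hxs

lemma mem_of_mem_splitRuns {w r : List ℕ} {x : ℕ} (hr : r ∈ splitRuns w) (hx : x ∈ r) : x ∈ w :=
  flatten_splitRuns w ▸ List.mem_flatten_of_mem hr hx

lemma splitRuns_flatten_tail {w u : List ℕ} {rs : List (List ℕ)} (h : splitRuns w = u :: rs) :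
    splitRuns rs.flatten = rs := by
  have hw := isRunDecomposition_splitRuns w
  rw [h] at hw
  exact IsRunDecomposition.splitRuns_flatten ⟨fun r hr => hw.1 r (by simp [hr]), hw.2.tail⟩

lemma des_append_of_splitRuns {u v : List ℕ} (hu : u ≠ []) (hv : v ≠ [])
    (h : splitRuns (u ++ v) = u :: splitRuns v) : des (u ++ v) = des v + 1 := by
  obtain ⟨x, u, rfl⟩ := List.exists_cons_of_ne_nil hu
  obtain ⟨y, v, rfl⟩ := List.exists_cons_of_ne_nil hv
  have h₁ := des_add_one_eq_length_splitRuns x (u ++ y :: v)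
  have h₂ := des_add_one_eq_length_splitRuns y v
  rw [← List.cons_append, h, List.length_cons, ← h₂] at h₁
  simpa using h₁

lemma isRunSorted_append_iff {u v : List ℕ} (hnd : (u ++ v).Nodup)
    (h : splitRuns (u ++ v) = u :: splitRuns v) :
    IsRunSorted (u ++ v) ↔ (∀ s ∈ splitRuns v, lexLe u s) ∧ IsRunSorted v := by
  rw [isRunSorted_iff_pairwise hnd, h, List.pairwise_cons,
    isRunSorted_iff_pairwise (List.nodup_append.1 hnd).2.1]

section Relabel

variable {f : ℕ → ℕ} {s : Set ℕ}

lemma des_map (hf : StrictMonoOn f s) : ∀ {w : List ℕ}, (∀ x ∈ w, x ∈ s) →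
    des (w.map f) = des w
  | [], _ => rfl
  | [_], _ => rfl
  | x :: y :: t, hw => by
    simp only [List.forall_mem_cons] at hw
    have ih := des_map hf (w := y :: t) (List.forall_mem_cons.2 hw.2)
    simp only [List.map_cons] at ih ⊢
    rw [des_cons_cons, des_cons_cons, ih]
    simp only [hf.lt_iff_lt hw.2.1 hw.1]

lemma splitRuns_map (hf : StrictMonoOn f s) : ∀ {w : List ℕ}, (∀ x ∈ w, x ∈ s) →
    splitRuns (w.map f) = (splitRuns w).map (List.map f)
  | [], _ => rfl
  | [_], _ => rfl
  | x :: y :: t, hw => by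
    simp only [List.forall_mem_cons] at hw
    have ih := splitRuns_map hf (w := y :: t) (List.forall_mem_cons.2 hw.2)
    obtain ⟨r, rs, h⟩ := splitRuns_cons y t
    simp only [List.map_cons] at ih ⊢
    rcases le_or_gt x y with hxy | hxy
    · rw [h, List.map_cons, List.map_cons] at ih
      rw [splitRuns_cons_cons_of_le hxy h,
        splitRuns_cons_cons_of_le ((hf.le_iff_le hw.1 hw.2.1).2 hxy) ih]
      simp only [List.map_cons]
    · rw [splitRuns_cons_cons_of_lt hxy,
        splitRuns_cons_cons_of_lt ((hf.lt_iff_lt hw.2.1 hw.1).2 hxy), ih, List.map_cons,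
        List.map_singleton]

lemma lexLe_map (hf : StrictMonoOn f s) : ∀ {a b : List ℕ}, (∀ x ∈ a, x ∈ s) →
    (∀ x ∈ b, x ∈ s) → lexLe (a.map f) (b.map f) = lexLe a b
  | [], _, _, _ => rfl
  | _ :: _, [], _, _ => rfl
  | x :: as, y :: bs, ha, hb => by
    simp only [List.forall_mem_cons] at ha hb
    have ih := lexLe_map hf ha.2 hb.2
    have heq : (f x == f y) = (x == y) := by
      rw [Bool.eq_iff_iff, beq_iff_eq, beq_iff_eq]
      exact hf.injOn.eq_iff ha.1 hb.1
    simp only [List.map_cons, lexLe, ih, heq, hf.lt_iff_lt ha.1 hb.1]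

lemma runsort_map (hf : StrictMonoOn f s) {w : List ℕ} (hw : ∀ x ∈ w, x ∈ s) :
    runsort (w.map f) = (runsort w).map f := by
  have hruns : ∀ r ∈ splitRuns w, ∀ x ∈ r, x ∈ s := fun r hr x hx =>
    hw x (mem_of_mem_splitRuns hr hx)
  rw [runsort, runsort, splitRuns_map hf hw, List.map_flatten,
    List.map_mergeSort fun a ha b hb => (lexLe_map hf (hruns a ha) (hruns b hb)).symm]

lemma isRunSorted_map_iff (hf : StrictMonoOn f s) {w : List ℕ} (hw : ∀ x ∈ w, x ∈ s) :
    IsRunSorted (w.map f) ↔ IsRunSorted w := by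
  have hsort : ∀ x ∈ runsort w, x ∈ s := fun x hx => by
    simp only [runsort, List.mem_flatten, List.mem_mergeSort] at hx
    obtain ⟨r, hr, hx⟩ := hx
    exact hw x (mem_of_mem_splitRuns hr hx)
  rw [IsRunSorted, IsRunSorted, runsort_map hf hw]
  exact ⟨fun h => hf.injOn.list_map hsort hw h, congrArg _⟩

end Relabel

def runSortedWords (V : Finset ℕ) : Finset (List ℕ) :=
  V.sort.permutations.toFinset.filter IsRunSorted

lemma mem_runSortedWords {V : Finset ℕ} {w : List ℕ} :
    w ∈ runSortedWords V ↔ w.Nodup ∧ w.toFinset = V ∧ IsRunSorted w := by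
  simp only [runSortedWords, Finset.mem_filter, List.mem_toFinset, List.mem_permutations]
  constructor
  · rintro ⟨hp, h⟩
    exact ⟨hp.nodup_iff.2 (V.sort_nodup _),
      by rw [List.toFinset_eq_of_perm _ _ hp, Finset.sort_toFinset], h⟩
  · rintro ⟨hnd, hV, h⟩
    exact ⟨List.perm_of_nodup_nodup_toFinset_eq hnd (V.sort_nodup _)
      (by rw [hV, Finset.sort_toFinset]), h⟩

lemma mem_of_mem_runSortedWords {V : Finset ℕ} {w : List ℕ} (hw : w ∈ runSortedWords V)
    {x : ℕ} (hx : x ∈ w) : x ∈ V :=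
  (mem_runSortedWords.1 hw).2.1 ▸ List.mem_toFinset.2 hx

noncomputable def runSortedDesPoly (V : Finset ℕ) : Polynomial ℝ :=
  ∑ w ∈ runSortedWords V, Polynomial.X ^ des w

lemma runSortedWords_image {f : ℕ → ℕ} {V : Finset ℕ} (hf : StrictMonoOn f V) :
    runSortedWords (V.image f) = (runSortedWords V).image (List.map f) := by
  ext w'
  simp only [Finset.mem_image, mem_runSortedWords]
  constructor
  · rintro ⟨hnd, hV, hrs⟩
    have hlift : ∀ y ∈ w', ∃ x ∈ (V : Set ℕ), f x = y := fun y hy =>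
      by simpa using (hV ▸ List.mem_toFinset.2 hy : y ∈ V.image f)
    set w := w'.map (Function.invFunOn f V)
    have hw : w.map f = w' := by
      rw [List.map_map]
      exact (List.map_congr_left fun y hy => Function.invFunOn_eq (hlift y hy)).trans w'.map_id
    have hwV : ∀ x ∈ w, x ∈ (V : Set ℕ) :=
      List.forall_mem_map.2 fun y hy => Function.invFunOn_mem (hlift y hy)
    refine ⟨w, ⟨(hw ▸ hnd).of_map f, ?_, (isRunSorted_map_iff hf hwV).1 (hw ▸ hrs)⟩, hw⟩
    ext x
    refine ⟨fun hx => hwV x (List.mem_toFinset.1 hx), fun hx => ?_⟩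
    have : f x ∈ w.map f := by
      rw [hw, ← List.mem_toFinset, hV]
      exact Finset.mem_image_of_mem f hx
    obtain ⟨x', hx', hfx⟩ := List.mem_map.1 this
    exact List.mem_toFinset.2 (hf.injOn (hwV x' hx') hx hfx ▸ hx')
  · rintro ⟨w, ⟨hnd, hV, hrs⟩, rfl⟩
    have hwV : ∀ x ∈ w, x ∈ (V : Set ℕ) := fun x hx => by simpa [← hV] using hx
    refine ⟨hnd.map_on fun x hx y hy => hf.injOn (hwV x hx) (hwV y hy), ?_,
      (isRunSorted_map_iff hf hwV).2 hrs⟩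
    ext y
    simp [← hV]

lemma runSortedDesPoly_image {f : ℕ → ℕ} {V : Finset ℕ} (hf : StrictMonoOn f V) :
    runSortedDesPoly (V.image f) = runSortedDesPoly V := by
  have hV : ∀ w ∈ runSortedWords V, ∀ x ∈ w, x ∈ (V : Set ℕ) := fun w hw x hx =>
    mem_of_mem_runSortedWords hw hx
  rw [runSortedDesPoly, runSortedWords_image hf,
    Finset.sum_image fun w₁ h₁ w₂ h₂ => hf.injOn.list_map (hV w₁ h₁) (hV w₂ h₂)]
  exact Finset.sum_congr rfl fun w hw => by rw [des_map hf (hV w hw)]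

/-- Replacing each letter by its rank in `V` changes neither runs nor descents. -/
lemma runSortedDesPoly_eq_Icc_card (V : Finset ℕ) :
    runSortedDesPoly V = runSortedDesPoly (Finset.Icc 1 V.card) := by
  set rank : ℕ → ℕ := fun x => (V.filter (· ≤ x)).card
  have hrank : StrictMonoOn rank V := fun x hx y hy hxy =>
    Finset.card_lt_card <| (Finset.ssubset_iff_of_subset
      (Finset.monotone_filter_right _ fun _ _ h => h.trans hxy.le)).2
      ⟨y, Finset.mem_filter.2 ⟨hy, le_rfl⟩, fun h => (Finset.mem_filter.1 h).2.not_gt hxy⟩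
  have himage : V.image rank = Finset.Icc 1 V.card := by
    refine Finset.eq_of_subset_of_card_le (fun r hr => ?_) ?_
    · obtain ⟨x, hx, rfl⟩ := Finset.mem_image.1 hr
      exact Finset.mem_Icc.2 ⟨Finset.card_pos.2 ⟨x, Finset.mem_filter.2 ⟨hx, le_rfl⟩⟩,
        Finset.card_filter_le _ _⟩
    · rw [Nat.card_Icc, Finset.card_image_of_injOn hrank.injOn, Nat.add_sub_cancel]
  rw [← himage, runSortedDesPoly_image hrank]

lemma permWord_injective (n : ℕ) : Function.Injective (permWord (n := n)) := fun σ τ h =>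
  Equiv.ext fun i => Fin.val_injective <| by simpa using congrFun (List.ofFn_injective h) i

lemma permWord_nodup {n : ℕ} (σ : Equiv.Perm (Fin n)) : (permWord σ).Nodup := by
  rw [permWord, List.nodup_ofFn]
  intro i j h
  simpa using σ.injective (Fin.val_injective (Nat.add_right_cancel h))

lemma permWord_toFinset {n : ℕ} (σ : Equiv.Perm (Fin n)) :
    (permWord σ).toFinset = Finset.Icc 1 n := by
  ext x
  simp only [permWord, List.mem_toFinset, List.mem_ofFn, Finset.mem_Icc]
  constructor
  · rintro ⟨i, rfl⟩
    exact ⟨Nat.le_add_left _ _, (σ i).isLt⟩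
  · rintro ⟨h₁, h₂⟩
    exact ⟨σ.symm ⟨x - 1, by omega⟩, by simp only [Equiv.apply_symm_apply]; omega⟩

lemma image_permWord (n : ℕ) :
    Finset.univ.image (permWord (n := n)) = (Finset.Icc 1 n).sort.permutations.toFinset := by
  refine Finset.eq_of_subset_of_card_le (fun w hw => ?_) ?_
  · obtain ⟨σ, -, rfl⟩ := Finset.mem_image.1 hw
    rw [List.mem_toFinset, List.mem_permutations]
    exact List.perm_of_nodup_nodup_toFinset_eq (permWord_nodup σ) (Finset.sort_nodup _ _)
      (by rw [permWord_toFinset, Finset.sort_toFinset])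
  · rw [List.toFinset_card_of_nodup (List.nodup_permutations _ (Finset.sort_nodup _ _)),
      List.length_permutations, Finset.length_sort, Nat.card_Icc, Nat.add_sub_cancel,
      Finset.card_image_of_injective _ (permWord_injective n), Finset.card_univ,
      Fintype.card_perm, Fintype.card_fin]

lemma A_eq_runSortedDesPoly (n : ℕ) : A n = runSortedDesPoly (Finset.Icc 1 n) := by
  rw [A, runSortedDesPoly, runSortedWords, ← image_permWord, Finset.filter_image,
    Finset.sum_image (permWord_injective n).injOn]

lemma splitRuns_of_isChain {w : List ℕ} (hw : w ≠ []) (h : w.IsChain (· ≤ ·)) :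
    splitRuns w = [w] := by
  simpa using splitRuns_append (v := []) hw h (by simp)

lemma isRunSorted_of_isChain {w : List ℕ} (h : w.IsChain (· ≤ ·)) : IsRunSorted w := by
  rcases eq_or_ne w [] with rfl | hw
  · simp [IsRunSorted, runsort]
  · simp [IsRunSorted, runsort, splitRuns_of_isChain hw h]

def afterFirstRun (w : List ℕ) : List ℕ := (splitRuns w).tail.flatten

lemma afterFirstRun_append {u v : List ℕ} (h : splitRuns (u ++ v) = u :: splitRuns v) :
    afterFirstRun (u ++ v) = v := by
  simp [afterFirstRun, h]

lemma exists_firstRun {w : List ℕ} (hw : des w ≠ 0) : ∃ u, u ≠ [] ∧ u.IsChain (· ≤ ·) ∧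
    afterFirstRun w ≠ [] ∧ (∀ x ∈ u.getLast?, ∀ y ∈ (afterFirstRun w).head?, y < x) ∧
    w = u ++ afterFirstRun w ∧ splitRuns w = u :: splitRuns (afterFirstRun w) := by
  obtain ⟨a, t, rfl⟩ := List.exists_cons_of_ne_nil (l := w) (by rintro rfl; exact hw rfl)
  obtain ⟨r, rs, h⟩ := splitRuns_cons a t
  have hR := isRunDecomposition_splitRuns (a :: t)
  have hlen := des_add_one_eq_length_splitRuns a t
  rw [h] at hR hlen
  obtain ⟨s, rs, rfl⟩ := List.exists_cons_of_ne_nil (l := rs) (by rintro rfl; simp_all)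
  have hs : s ≠ [] := (hR.1 s (by simp)).1
  have hv : afterFirstRun (a :: t) = s ++ rs.flatten := by simp [afterFirstRun, h]
  refine ⟨a :: r, by simp, (hR.1 _ (by simp)).2, by simp [hv, hs], ?_, ?_, ?_⟩
  · simpa [hv, List.head?_append_of_ne_nil _ hs] using hR.2.rel_head? (by simp)
  · rw [hv, ← List.flatten_cons, ← List.flatten_cons, ← h, flatten_splitRuns]
  · rw [h, hv, ← List.flatten_cons, splitRuns_flatten_tail h]

/-- The letter sets left after removing the first run of a run-sorted word on `{1, …, n}` with a
descent: that run is the increasing arrangement of the complement, which contains `1`, and it must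
end above some letter of `W`. -/
def tailSets (n : ℕ) : Finset (Finset ℕ) :=
  (Finset.Icc 2 n).powerset.filter fun W => ∃ a ∈ W, ∃ b ∈ Finset.Icc (1 : ℕ) n \ W, a < b

lemma tailSets_subset (n : ℕ) : tailSets n ⊆ (Finset.Icc 2 n).powerset :=
  Finset.filter_subset _ _

lemma mem_tailSets {n : ℕ} {W : Finset ℕ} : W ∈ tailSets n ↔
    W ⊆ Finset.Icc 2 n ∧ ∃ a ∈ W, ∃ b ∈ Finset.Icc 1 n \ W, a < b := by
  simp only [tailSets, Finset.mem_filter, Finset.mem_powerset]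

lemma afterFirstRun_mem_runSortedWords {n : ℕ} {w : List ℕ}
    (hw : w ∈ runSortedWords (Finset.Icc 1 n)) (hd : des w ≠ 0) :
    (afterFirstRun w).toFinset ∈ tailSets n ∧
    afterFirstRun w ∈ runSortedWords (afterFirstRun w).toFinset ∧
    des w = des (afterFirstRun w) + 1 ∧
    (Finset.Icc 1 n \ (afterFirstRun w).toFinset).sort ++ afterFirstRun w = w := by
  obtain ⟨hnd, hV, hrs⟩ := mem_runSortedWords.1 hw
  obtain ⟨u, hu, hc, hv, hlt, hw, hsplit⟩ := exists_firstRun hd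
  set v := afterFirstRun w
  rw [hw] at hnd hV hrs hsplit
  obtain ⟨hund, hvnd, hdisj⟩ := List.nodup_append.1 hnd
  have hC : Finset.Icc 1 n \ v.toFinset = u.toFinset := by
    rw [← hV, List.toFinset_append, Finset.union_sdiff_right, Finset.sdiff_eq_self_of_disjoint]
    exact List.disjoint_toFinset_iff_disjoint.2 fun x hx hx' => hdisj x hx x hx' rfl
  obtain ⟨a, u', rfl⟩ := List.exists_cons_of_ne_nil hu
  -- the smallest letter `1` starts the word, so it lies in the first run
  have ha : a = 1 := by
    have ha : a ∈ Finset.Icc 1 n := hV ▸ by simp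
    have h1 : 1 ∈ a :: u' ++ v := by
      rw [← List.mem_toFinset, hV]; simp [(Finset.mem_Icc.1 ha).2.trans' (Finset.mem_Icc.1 ha).1]
    have := head_le_of_isRunSorted hnd hrs h1
    simp at ha; omega
  subst ha
  refine ⟨mem_tailSets.2 ⟨fun x hx => ?_, ?_⟩, ?_, ?_, ?_⟩
  · have hx' : x ∈ Finset.Icc 1 n := hV ▸ by simp [List.mem_toFinset.1 hx]
    have : x ≠ 1 := by rintro rfl; exact hdisj 1 (by simp) 1 (List.mem_toFinset.1 hx) rfl
    simp only [Finset.mem_Icc] at hx' ⊢; omega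
  · obtain ⟨y, hy⟩ := Option.isSome_iff_exists.1 (List.isSome_head?.2 hv)
    obtain ⟨x, hx⟩ : ∃ x, x ∈ (1 :: u').getLast? := ⟨_, List.getLast?_eq_some_getLast hu⟩
    refine ⟨y, List.mem_toFinset.2 (List.mem_of_mem_head? hy), x, ?_, hlt x hx y hy⟩
    rw [hC]; exact List.mem_toFinset.2 (List.mem_of_mem_getLast? hx)
  · exact mem_runSortedWords.2 ⟨hvnd, rfl, ((isRunSorted_append_iff hnd hsplit).1 hrs).2⟩
  · rw [hw]; exact des_append_of_splitRuns hu hv hsplit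
  · rw [hC, (List.toFinset_sort _ hund).2 (List.isChain_iff_pairwise.1 hc), hw]

lemma append_mem_runSortedWords {n : ℕ} {W : Finset ℕ} (hW : W ∈ tailSets n) {v : List ℕ}
    (hv : v ∈ runSortedWords W) :
    (Finset.Icc 1 n \ W).sort ++ v ∈ runSortedWords (Finset.Icc 1 n) ∧
    des ((Finset.Icc 1 n \ W).sort ++ v) = des v + 1 ∧
    afterFirstRun ((Finset.Icc 1 n \ W).sort ++ v) = v := by
  obtain ⟨hW2, a, ha, b, hb, hab⟩ := mem_tailSets.1 hW
  obtain ⟨hvnd, rfl, hvrs⟩ := mem_runSortedWords.1 hv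
  set u := (Finset.Icc 1 n \ v.toFinset).sort
  have hWn : v.toFinset ⊆ Finset.Icc 1 n := hW2.trans (Finset.Icc_subset_Icc_left one_le_two)
  have hu : u.IsChain (· ≤ ·) := List.isChain_iff_pairwise.2 (Finset.pairwise_sort _ _)
  have hbu : b ∈ u := (Finset.mem_sort _).2 hb
  obtain ⟨c, v', rfl⟩ := List.exists_cons_of_ne_nil (List.ne_nil_of_mem (List.mem_toFinset.1 ha))
  have hsplit : splitRuns (u ++ c :: v') = u :: splitRuns (c :: v') := by
    refine splitRuns_append (List.ne_nil_of_mem hbu) hu fun x hx y hy => ?_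
    rw [List.head?_cons, Option.mem_some_iff] at hy
    subst hy
    calc c ≤ a := head_le_of_isRunSorted hvnd hvrs (List.mem_toFinset.1 ha)
      _ < b := hab
      _ ≤ x := hu.le_of_mem_getLast? hx hbu
  have hnd : (u ++ c :: v').Nodup := List.nodup_append.2 ⟨Finset.sort_nodup _ _, hvnd,
    fun x hx y hy hxy =>
      (Finset.mem_sdiff.1 ((Finset.mem_sort _).1 hx)).2 (List.mem_toFinset.2 (hxy ▸ hy))⟩
  -- the first run starts with `1`, every later run with a letter `≥ 2`
  have h1u : ∃ u', u = 1 :: u' := by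
    have hmem : ∀ x ∈ u, x ∈ Finset.Icc 1 n \ (c :: v').toFinset := fun x hx =>
      (Finset.mem_sort _).1 hx
    have h1 : 1 ∈ u := (Finset.mem_sort _).2 <| Finset.mem_sdiff.2
      ⟨Finset.mem_Icc.2 ⟨le_rfl, by have := Finset.mem_Icc.1 (hW2 ha); omega⟩,
        fun h => by simpa using hW2 h⟩
    obtain ⟨d, u', hdu⟩ := List.exists_cons_of_ne_nil (List.ne_nil_of_mem h1)
    have hd := Finset.mem_Icc.1 (Finset.mem_sdiff.1 (hmem d (by rw [hdu]; simp))).1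
    have := (hdu ▸ hu).le_of_mem_cons (hdu ▸ h1)
    exact ⟨u', by rw [hdu, le_antisymm this hd.1]⟩
  have hlex : ∀ s ∈ splitRuns (c :: v'), lexLe u s := by
    intro s hs
    obtain ⟨u', hu'⟩ := h1u
    obtain ⟨e, s', rfl⟩ := List.exists_cons_of_ne_nil
      ((isRunDecomposition_splitRuns _).1 s hs).1
    have he := hW2 (List.mem_toFinset.2 (mem_of_mem_splitRuns hs (List.mem_cons_self ..)))
    rw [hu']
    exact lexLe_cons_cons_of_lt (Finset.mem_Icc.1 he).1 _ _
  refine ⟨mem_runSortedWords.2 ⟨hnd, ?_, (isRunSorted_append_iff hnd hsplit).2 ⟨hlex, hvrs⟩⟩,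
    des_append_of_splitRuns (List.ne_nil_of_mem hbu) (List.cons_ne_nil _ _) hsplit,
    afterFirstRun_append hsplit⟩
  rw [List.toFinset_append, Finset.sort_toFinset, Finset.sdiff_union_of_subset hWn]

lemma filter_des_eq_zero_runSortedWords (V : Finset ℕ) :
    (runSortedWords V).filter (fun w => des w = 0) = {V.sort} := by
  ext w
  simp only [Finset.mem_filter, Finset.mem_singleton, mem_runSortedWords]
  constructor
  · rintro ⟨⟨hnd, rfl, -⟩, hd⟩
    exact ((List.toFinset_sort _ hnd).2 (List.isChain_iff_pairwise.1 (des_eq_zero_iff.1 hd))).symm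
  · rintro rfl
    have hc : V.sort.IsChain (· ≤ ·) := List.isChain_iff_pairwise.2 (Finset.pairwise_sort _ _)
    exact ⟨⟨Finset.sort_nodup _ _, Finset.sort_toFinset _ _, isRunSorted_of_isChain hc⟩,
      des_eq_zero_iff.2 hc⟩

lemma sum_runSortedWords_filter_des_ne_zero (n : ℕ) :
    ∑ w ∈ (runSortedWords (Finset.Icc 1 n)).filter (fun w => ¬des w = 0),
      (Polynomial.X : Polynomial ℝ) ^ des w =
      Polynomial.X * ∑ W ∈ tailSets n, runSortedDesPoly W := by
  calc _ = ∑ p ∈ (tailSets n).sigma runSortedWords,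
          (Polynomial.X : Polynomial ℝ) ^ (des p.2 + 1) := by
        refine Finset.sum_nbij' (fun w => ⟨(afterFirstRun w).toFinset, afterFirstRun w⟩)
          (fun p => (Finset.Icc 1 n \ p.1).sort ++ p.2) ?_ ?_ ?_ ?_ ?_
        · intro w hw
          obtain ⟨hw, hd⟩ := Finset.mem_filter.1 hw
          obtain ⟨hW, hv, -⟩ := afterFirstRun_mem_runSortedWords hw hd
          exact Finset.mem_sigma.2 ⟨hW, hv⟩
        · rintro ⟨W, v⟩ hp
          obtain ⟨hW, hv⟩ := Finset.mem_sigma.1 hp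
          obtain ⟨hw, hd, -⟩ := append_mem_runSortedWords hW hv
          exact Finset.mem_filter.2 ⟨hw, by simp [hd]⟩
        · intro w hw
          obtain ⟨hw, hd⟩ := Finset.mem_filter.1 hw
          exact (afterFirstRun_mem_runSortedWords hw hd).2.2.2
        · rintro ⟨W, v⟩ hp
          obtain ⟨hW, hv⟩ := Finset.mem_sigma.1 hp
          simp only [(append_mem_runSortedWords hW hv).2.2, (mem_runSortedWords.1 hv).2.1]
        · intro w hw
          obtain ⟨hw, hd⟩ := Finset.mem_filter.1 hw
          rw [(afterFirstRun_mem_runSortedWords hw hd).2.2.1]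
    _ = _ := by
        simp only [Finset.sum_sigma, Finset.mul_sum, runSortedDesPoly, pow_succ']

lemma runSortedDesPoly_Icc (n : ℕ) :
    runSortedDesPoly (Finset.Icc 1 n) =
      1 + Polynomial.X * ∑ W ∈ tailSets n, runSortedDesPoly W := by
  have hc : (Finset.Icc 1 n).sort.IsChain (· ≤ ·) :=
    List.isChain_iff_pairwise.2 (Finset.pairwise_sort _ _)
  rw [runSortedDesPoly, ← Finset.sum_filter_add_sum_filter_not _ (fun w => des w = 0),
    filter_des_eq_zero_runSortedWords, Finset.sum_singleton, des_eq_zero_iff.2 hc, pow_zero,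
    sum_runSortedWords_filter_des_ne_zero]

lemma eq_Ioc_of_forall_lt {n : ℕ} {W : Finset ℕ} (hW : W ⊆ Finset.Icc 1 n)
    (h : ∀ a ∈ W, ∀ b ∈ Finset.Icc 1 n \ W, b < a) : W = Finset.Ioc (n - W.card) n := by
  have hcard : W.card ≤ n := by simpa using Finset.card_le_card hW
  symm
  refine Finset.eq_of_subset_of_card_le (fun x hx => ?_) (by simp; omega)
  obtain ⟨hx₁, hx₂⟩ := Finset.mem_Ioc.1 hx
  by_contra hxW
  -- every letter of `W` lies above `x`, which leaves too little room
  have : W ⊆ Finset.Ioc x n := fun a ha => Finset.mem_Ioc.2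
    ⟨h a ha x (Finset.mem_sdiff.2 ⟨Finset.mem_Icc.2 ⟨by omega, hx₂⟩, hxW⟩),
      (Finset.mem_Icc.1 (hW ha)).2⟩
  have := Finset.card_le_card this
  simp only [Nat.card_Ioc] at this
  omega

lemma powerset_sdiff_tailSets {n : ℕ} (hn : 1 ≤ n) :
    (Finset.Icc 2 n).powerset \ tailSets n =
      (Finset.range n).image fun i => Finset.Ioc (n - i) n := by
  ext W
  simp only [Finset.mem_sdiff, Finset.mem_powerset, mem_tailSets, Finset.mem_image,
    Finset.mem_range, not_and, not_exists, not_lt]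
  constructor
  · rintro ⟨hW, h⟩
    have hW1 : W ⊆ Finset.Icc 1 n := hW.trans (Finset.Icc_subset_Icc_left one_le_two)
    refine ⟨W.card, ?_, (eq_Ioc_of_forall_lt hW1 fun a ha b hb => ?_).symm⟩
    · have := Finset.card_le_card hW
      simp only [Nat.card_Icc] at this; omega
    · obtain ⟨hb, hbW⟩ := Finset.mem_sdiff.1 hb
      exact (h hW a ha b ⟨hb, hbW⟩).lt_of_ne (by rintro rfl; exact hbW ha)
  · rintro ⟨i, hi, rfl⟩
    refine ⟨fun x hx => ?_, fun _ a ha b hb => ?_⟩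
    · simp only [Finset.mem_Ioc, Finset.mem_Icc] at hx ⊢; omega
    · simp only [Finset.mem_Ioc, Finset.mem_Icc] at ha hb; omega

lemma sum_tailSets {M : Type*} [AddCommGroup M] (f : ℕ → M) {n : ℕ} (hn : 1 ≤ n) :
    ∑ W ∈ tailSets n, f W.card = ∑ i ∈ Finset.range n, ((n - 1).choose i • f i - f i) := by
  have hinj : Set.InjOn (fun i => Finset.Ioc (n - i) n) (Finset.range n) := fun i hi j hj hij => by
    have := congrArg Finset.card hij
    simp only [Nat.card_Ioc, Finset.coe_range, Set.mem_Iio] at this hi hj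
    omega
  have hcard : ∑ i ∈ Finset.range n, f (Finset.Ioc (n - i) n).card = ∑ i ∈ Finset.range n, f i :=
    Finset.sum_congr rfl fun i hi => by
      rw [Nat.card_Ioc, Nat.sub_sub_self (Finset.mem_range.1 hi).le]
  have h := Finset.sum_sdiff (f := fun W => f W.card) (tailSets_subset n)
  rw [powerset_sdiff_tailSets hn, Finset.sum_image hinj, hcard, Finset.sum_powerset_apply_card,
    Nat.card_Icc, show n + 1 - 2 + 1 = n by omega] at h
  rw [Finset.sum_sub_distrib]
  exact eq_sub_of_add_eq' h

lemma A_zero : A 0 = 1 := by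
  rw [A_eq_runSortedDesPoly, runSortedDesPoly_Icc]
  simp [tailSets]

lemma A_succ (m : ℕ) :
    A (m + 1) = 1 + Polynomial.X *
      ∑ i ∈ Finset.range (m + 1), ((m.choose i : Polynomial ℝ) - 1) * A i := by
  have hW : ∀ W ∈ tailSets (m + 1), runSortedDesPoly W = A W.card := fun W _ => by
    rw [runSortedDesPoly_eq_Icc_card, A_eq_runSortedDesPoly]
  rw [A_eq_runSortedDesPoly, runSortedDesPoly_Icc, Finset.sum_congr rfl hW,
    sum_tailSets A (Nat.le_add_left 1 m), Nat.add_sub_cancel]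
  simp only [nsmul_eq_mul, sub_mul, one_mul]

lemma sum_range_choose_succ_sub_one {R : Type*} [CommRing R] (m : ℕ) (f : ℕ → R) :
    ∑ i ∈ Finset.range (m + 2), (((m + 1).choose i : R) - 1) * f i =
      ∑ i ∈ Finset.range (m + 1), ((m.choose i : R) - 1) * f i +
        ∑ i ∈ Finset.Icc 1 m, (m.choose (i - 1) : R) * f i := by
  have hsplit : ∀ g : ℕ → R, ∑ i ∈ Finset.range (m + 1), g i = g 0 + ∑ i ∈ Finset.Icc 1 m, g i :=
    fun g => by rw [Finset.range_eq_Ico, Finset.sum_eq_sum_Ico_succ_bot m.succ_pos]; rfl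
  rw [Finset.sum_range_succ, Nat.choose_self, Nat.cast_one, sub_self, zero_mul, add_zero,
    hsplit, hsplit, Nat.choose_zero_right, Nat.choose_zero_right, Nat.cast_one, sub_self,
    zero_mul, zero_add, zero_add, ← Finset.sum_add_distrib]
  refine Finset.sum_congr rfl fun i hi => ?_
  obtain ⟨j, rfl⟩ := Nat.exists_eq_add_of_le' (Finset.mem_Icc.1 hi).1
  rw [Nat.choose_succ_succ', Nat.add_sub_cancel]
  push_cast
  ring

theorem stmt2_general (n : ℕ) :
    A n = A (n-1) +
      Polynomial.X * ∑ i ∈ Finset.Icc 1 (n-2), ((n-2).choose (i-1) : Polynomial ℝ) * A i := by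
  match n with
  | 0 => simp
  | 1 => simp [A_succ 0, A_zero]
  | m + 2 =>
    rw [show m + 2 - 1 = m + 1 from rfl, show m + 2 - 2 = m from rfl, A_succ (m + 1), A_succ m,
      sum_range_choose_succ_sub_one]
    ring

/-- `A n = A (n-1) + t ∑_{i=1}^{n-2} C(n-2, i-1) A i`. -/
theorem stmt2 (n : ℕ) (hn : 1 ≤ n) :
    A n = A (n-1) +
      Polynomial.X * ∑ i ∈ Finset.Icc 1 (n-2), ((n-2).choose (i-1) : Polynomial ℝ) * A i :=
  stmt2_general n
end

section
/- The formal power series G(t,u) = e^u · exp(t(e^u − u − 1)) in ℝ[t][[u]] satisfies the differential equation ∂G/∂u = (1 + t(e^u − 1))·G, with G(t,0) = 1. Consequently, its coefficients A_{n+1}(t) defined by G(t,u) = ∑_{n≥0} A_{n+1}(t) u^n/n! satisfy A_1(t) = 1 and A_n(t) = A_{n-1}(t) + t·∑_{i=1}^{n-2} C(n-2, i-1) A_i(t). -/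
open PowerSeries

/-- The exponential `exp(f)` of a power series `f` with zero constant term, defined
coefficientwise by `coeff n (exp f) = ∑_{k ≤ n} (1/k!) coeff n (f^k)`. -/
noncomputable def expComp (f : PowerSeries (Polynomial ℝ)) : PowerSeries (Polynomial ℝ) :=
  PowerSeries.mk fun n =>
    ∑ k ∈ Finset.range (n+1), ((k.factorial : ℝ)⁻¹) • (PowerSeries.coeff n (f ^ k))

/-- `G(t,u) = e^u · exp(t (e^u − u − 1))` as a power series in `u` over `ℝ[t]`. -/
noncomputable def G : PowerSeries (Polynomial ℝ) :=
  PowerSeries.exp (Polynomial ℝ) *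
    expComp ((PowerSeries.C Polynomial.X) *
      (PowerSeries.exp (Polynomial ℝ) - PowerSeries.X - 1))

/-- `A_{n+1}(t)`, the coefficients of `G` defined by `G = ∑_{n≥0} A_{n+1}(t) uⁿ/n!`. -/
noncomputable def Ac (m : ℕ) : Polynomial ℝ :=
  ((m-1).factorial : ℝ) • PowerSeries.coeff (m-1) G

/-!
`expComp f` is the substitution of `f` into `exp`, so the chain rule gives
`(exp f)' = f' · exp f`, and the differential equation for `G = e^u · exp(t (e^u − u − 1))`
follows from the Leibniz rule. Reading that equation off coefficientwise, the `n!`-scaled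
coefficients of `e^u · G` are the binomial transform of those of `G`, which is the recurrence.
-/

open Finset Nat

section EGF

variable {A : Type*} [CommRing A] [Algebra ℚ A]

theorem factorial_mul_coeff_exp_mul (F : A⟦X⟧) (n : ℕ) :
    (n ! : A) * coeff n (exp A * F) =
      ∑ j ∈ range (n + 1), (n.choose j : A) * ((j ! : A) * coeff j F) := by
  rw [mul_comm (exp A), coeff_mul, sum_antidiagonal_eq_sum_range_succ
    (fun j i => coeff j F * coeff i (exp A)), mul_sum]
  refine Finset.sum_congr rfl fun j hj => ?_
  have hfac : (n ! : A) = n.choose j * j ! * (n - j)! := by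
    rw [← choose_mul_factorial_mul_factorial (mem_range_succ_iff.1 hj)]
    push_cast
    ring
  have hinv : ((n - j)! : A) * algebraMap ℚ A (1 / (n - j)!) = 1 := by
    rw [← map_natCast (algebraMap ℚ A), ← map_mul, mul_one_div_cancel (by positivity), map_one]
  rw [coeff_exp, hfac]
  linear_combination (n.choose j * j ! * coeff j F : A) * hinv

theorem factorial_mul_coeff_succ_of_derivative_eq {c : A} {F : A⟦X⟧}
    (hF : d⁄dX A F = (1 + C c * (exp A - 1)) * F) (m : ℕ) :
    ((m + 1)! : A) * coeff (m + 1) F =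
      (m ! : A) * coeff m F + c * ∑ j ∈ range m, (m.choose j : A) * ((j ! : A) * coeff j F) := by
  have hcoeff := congrArg (fun F => (m ! : A) * coeff m F) hF
  have hexp := factorial_mul_coeff_exp_mul F m
  rw [sum_range_succ, choose_self, cast_one, one_mul] at hexp
  have hsplit : (1 + C c * (exp A - 1)) * F = F + C c * (exp A * F) - C c * F := by ring
  simp only [coeff_derivative, hsplit, map_sub, map_add, coeff_C_mul] at hcoeff
  push_cast [factorial_succ]
  linear_combination hcoeff + c * hexp

end EGF

theorem coeff_pow_eq_zero_of_lt {A : Type*} [CommRing A] {f : A⟦X⟧}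
    (hf : constantCoeff f = 0) {n k : ℕ} (h : n < k) : coeff n (f ^ k) = 0 :=
  coeff_of_lt_order n ((cast_lt.2 h).trans_le (le_order_pow_of_constantCoeff_eq_zero k hf))

theorem expComp_eq_subst_exp {f : (Polynomial ℝ)⟦X⟧} (hf : constantCoeff f = 0) :
    expComp f = (exp (Polynomial ℝ)).subst f := by
  refine PowerSeries.ext fun n => ?_
  have hsupp : (Function.support fun k => coeff k (exp (Polynomial ℝ)) • coeff n (f ^ k)) ⊆
      range (n + 1) := fun k hk => by
    by_contra hkn
    exact hk (by simp only [coeff_pow_eq_zero_of_lt hf (by simpa using hkn), smul_zero])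
  rw [coeff_subst' (HasSubst.of_constantCoeff_zero' hf),
    finsum_eq_sum_of_support_subset _ hsupp, expComp, coeff_mk]
  refine Finset.sum_congr rfl fun k _ => ?_
  rw [coeff_exp, Polynomial.smul_eq_C_mul, smul_eq_mul]
  congr 1
  simp [Polynomial.algebraMap_apply]

theorem derivative_expComp {f : (Polynomial ℝ)⟦X⟧} (hf : constantCoeff f = 0) :
    d⁄dX _ (expComp f) = expComp f * d⁄dX _ f := by
  rw [expComp_eq_subst_exp hf, derivative_subst (HasSubst.of_constantCoeff_zero' hf),
    derivative_exp]

theorem constantCoeff_expComp (f : (Polynomial ℝ)⟦X⟧) : constantCoeff (expComp f) = 1 := by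
  rw [← coeff_zero_eq_constantCoeff_apply, expComp, coeff_mk]
  simp

theorem derivative_G : d⁄dX _ G = (1 + C Polynomial.X * (exp (Polynomial ℝ) - 1)) * G := by
  have hf : constantCoeff (C Polynomial.X * (exp (Polynomial ℝ) - X - 1)) = 0 := by simp
  simp only [G, Derivation.leibniz, derivative_expComp hf, derivative_exp, map_sub,
    derivative_C, derivative_X, Derivation.map_one_eq_zero, smul_eq_mul]
  ring

theorem constantCoeff_G : constantCoeff G = 1 := by
  rw [G, map_mul, constantCoeff_expComp, constantCoeff_exp, mul_one]

theorem Ac_succ (m : ℕ) : Ac (m + 1) = (m ! : Polynomial ℝ) * coeff m G := by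
  rw [Ac, Nat.add_sub_cancel, cast_smul_eq_nsmul, nsmul_eq_mul]

theorem Ac_add_two (m : ℕ) :
    Ac (m + 2) =
      Ac (m + 1) + Polynomial.X * ∑ j ∈ range m, (m.choose j : Polynomial ℝ) * Ac (j + 1) := by
  simp only [Ac_succ]
  exact factorial_mul_coeff_succ_of_derivative_eq derivative_G m

/-- `G` satisfies `∂G/∂u = (1 + t(e^u − 1)) G` with `G(t,0) = 1`, and consequently
its coefficients satisfy `A_1 = 1` and
`A_n = A_{n-1} + t ∑_{i=1}^{n-2} C(n-2, i-1) A_i`. -/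
theorem stmt10 :
    PowerSeries.derivative (Polynomial ℝ) G =
      (1 + PowerSeries.C Polynomial.X *
        (PowerSeries.exp (Polynomial ℝ) - 1)) * G ∧
    PowerSeries.constantCoeff G = 1 ∧
    Ac 1 = 1 ∧
    (∀ n : ℕ, 2 ≤ n → Ac n = Ac (n-1) +
      Polynomial.X * ∑ i ∈ Finset.Icc 1 (n-2), ((n-2).choose (i-1) : Polynomial ℝ) * Ac i) := by
  refine ⟨derivative_G, constantCoeff_G, ?_, fun n hn => ?_⟩
  · rw [Ac_succ 0, coeff_zero_eq_constantCoeff_apply, constantCoeff_G, factorial_zero, cast_one,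
      one_mul]
  · obtain ⟨m, rfl⟩ : ∃ m, n = m + 2 := ⟨n - 2, by omega⟩
    rw [show m + 2 - 1 = m + 1 by omega, Nat.add_sub_cancel, Ac_add_two,
      ← Ico_add_one_right_eq_Icc, sum_Ico_eq_sum_range, Nat.add_sub_cancel]
    simp only [add_comm 1, Nat.add_sub_cancel]
end

section
/- For n ≥ 0 and k ≥ 2, the number of binary words w of length n such that runsort(w) has exactly k−1 descents equals C(n, 2k) + C(n, 2k+1), and the number of binary words of length n such that runsort(w) has no descents equals C(n+1, 3) + (n+1). -/
/-- The word (list of 0s and 1s) corresponding to a binary word on `Fin n`. -/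
def word {n : ℕ} (w : Fin n → Fin 2) : List ℕ := List.ofFn fun i => (w i : ℕ)

open Finset

namespace BinaryRunsort

def asc (l : List ℕ) : ℕ := ((l.zip l.tail).filter fun p => decide (p.1 < p.2)).length

lemma des_cons_cons (x y : ℕ) (t : List ℕ) :
    des (x :: y :: t) = des (y :: t) + if y < x then 1 else 0 := by
  simp only [des, List.tail_cons, List.zip_cons_cons, List.filter_cons, decide_eq_true_eq]
  split <;> simp

lemma asc_cons_cons (x y : ℕ) (t : List ℕ) :
    asc (x :: y :: t) = asc (y :: t) + if x < y then 1 else 0 := by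
  simp only [asc, List.tail_cons, List.zip_cons_cons, List.filter_cons, decide_eq_true_eq]
  split <;> simp

lemma des_eq_zero_of_isChain : ∀ {l : List ℕ}, l.IsChain (· ≤ ·) → des l = 0
  | [], _ | [_], _ => rfl
  | x :: y :: t, h => by
    obtain ⟨hxy, ht⟩ := List.isChain_cons_cons.mp h
    rw [des_cons_cons, des_eq_zero_of_isChain ht, if_neg (Nat.not_lt.mpr hxy)]

lemma des_append_cons : ∀ {r : List ℕ}, r ≠ [] → ∀ (b : ℕ) (s : List ℕ),
    des (r ++ b :: s) = des r + des (b :: s) + if b < r.getLastD 0 then 1 else 0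
  | [x], _, b, s => by rw [List.singleton_append, des_cons_cons]; simp [des]
  | x :: y :: r, _, b, s => by
    rw [List.cons_append, List.cons_append, des_cons_cons, ← List.cons_append,
      des_append_cons (List.cons_ne_nil y r), des_cons_cons]
    simp only [List.getLastD_cons]
    omega

lemma cons_le_cons_iff_lex {α : Type*} [LinearOrder α] {a b : α} {l₁ l₂ : List α} :
    a :: l₁ ≤ b :: l₂ ↔ a < b ∨ a = b ∧ l₁ ≤ l₂ := by
  simp only [le_iff_lt_or_eq, List.cons_eq_cons]
  change List.Lex (· < ·) _ _ ∨ _ ↔ _ ∨ _ ∧ (List.Lex (· < ·) _ _ ∨ _)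
  rw [List.cons_lex_cons_iff]
  tauto

lemma lexLe_eq_true_iff : ∀ a b : List ℕ, lexLe a b = true ↔ a ≤ b
  | [], [] => by simp [lexLe]
  | [], _ :: _ => by simpa [lexLe] using le_of_lt List.Lex.nil
  | x :: as, [] => by simp [lexLe]
  | x :: as, y :: bs => by simp [lexLe, cons_le_cons_iff_lex, lexLe_eq_true_iff as bs]

lemma forall_eq_zero_of_le : ∀ {r r' : List ℕ}, r ≤ r' → (∀ y ∈ r', y = 0) → ∀ x ∈ r, x = 0
  | [], _, _, _ => by simp
  | x :: as, [], h, _ => by simp [← lexLe_eq_true_iff, lexLe] at h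
  | x :: as, y :: bs, h, hz => by
    obtain rfl : y = 0 := hz y List.mem_cons_self
    rcases cons_le_cons_iff_lex.mp h with hlt | ⟨rfl, hle⟩
    · omega
    · simp only [List.mem_cons, forall_eq_or_imp, true_and] at hz ⊢
      exact forall_eq_zero_of_le hle hz

structure IsBinaryRun (r : List ℕ) : Prop where
  ne_nil : r ≠ []
  isChain : r.IsChain (· ≤ ·)
  le_one : ∀ x ∈ r, x ≤ 1

/-- `0`, `1` or `2` for a binary run `0^a 1^b` that is all zeros, has both letters, or is all
ones. -/
def runType (r : List ℕ) : ℕ := r.headD 0 + r.getLastD 0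

namespace IsBinaryRun

variable {r : List ℕ}

lemma getLastD_eq_getLast (hr : IsBinaryRun r) : r.getLastD 0 = r.getLast hr.ne_nil := by
  obtain ⟨y, t, rfl⟩ := List.exists_cons_of_ne_nil hr.ne_nil
  rw [List.getLastD_cons, List.getLast_eq_getLastD]

lemma le_getLastD (hr : IsBinaryRun r) {x : ℕ} (hx : x ∈ r) : x ≤ r.getLastD 0 := by
  rw [hr.getLastD_eq_getLast]
  exact (List.isChain_iff_pairwise.mp hr.isChain).rel_getLast hx

lemma getLastD_le_one (hr : IsBinaryRun r) : r.getLastD 0 ≤ 1 := by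
  rw [hr.getLastD_eq_getLast]
  exact hr.le_one _ (List.getLast_mem _)

lemma headD_le_getLastD (hr : IsBinaryRun r) : r.headD 0 ≤ r.getLastD 0 := by
  obtain ⟨y, t, rfl⟩ := List.exists_cons_of_ne_nil hr.ne_nil
  exact hr.le_getLastD List.mem_cons_self

end IsBinaryRun

lemma runType_le_runType {r r' : List ℕ} (hr : IsBinaryRun r) (hr' : IsBinaryRun r')
    (h : r ≤ r') : runType r ≤ runType r' := by
  have head_le : r.headD 0 ≤ r'.headD 0 := by
    obtain ⟨x, t, rfl⟩ := List.exists_cons_of_ne_nil hr.ne_nil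
    obtain ⟨x', t', rfl⟩ := List.exists_cons_of_ne_nil hr'.ne_nil
    simp only [List.headD_cons]
    rcases cons_le_cons_iff_lex.mp h with hlt | ⟨rfl, -⟩
    · exact hlt.le
    · exact le_rfl
  have last_le : r.getLastD 0 ≤ r'.getLastD 0 := by
    by_contra! hlt
    have hzero : ∀ y ∈ r', y = 0 := fun y hy => by
      have := hr'.le_getLastD hy
      have := hr.getLastD_le_one
      omega
    have := forall_eq_zero_of_le h hzero _ (hr.getLastD_eq_getLast ▸ List.getLast_mem _)
    omega
  unfold runType
  omega

lemma headD_lt_getLastD_iff {r r' : List ℕ} (hr : IsBinaryRun r) (hr' : IsBinaryRun r')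
    (h : runType r ≤ runType r') :
    r'.headD 0 < r.getLastD 0 ↔ runType r = 1 ∧ runType r' = 1 := by
  have := hr.headD_le_getLastD
  have := hr.getLastD_le_one
  have := hr'.headD_le_getLastD
  have := hr'.getLastD_le_one
  unfold runType at h ⊢
  omega

lemma des_flatten : ∀ {rs : List (List ℕ)}, (∀ r ∈ rs, IsBinaryRun r) →
    rs.Pairwise (runType · ≤ runType ·) → des rs.flatten = rs.countP (runType · = 1) - 1
  | [], _, _ => rfl
  | [r], hrs, _ => by
    simp only [List.flatten_singleton, des_eq_zero_of_isChain (hrs r List.mem_cons_self).isChain,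
      List.countP_singleton]
    split <;> rfl
  | r :: r' :: rest, hrs, hsorted => by
    have hr := hrs r List.mem_cons_self
    have hr' := hrs r' (by simp)
    obtain ⟨b, s, rfl⟩ := List.exists_cons_of_ne_nil hr'.ne_nil
    obtain ⟨hle, htail⟩ := List.pairwise_cons.mp hsorted
    have ih := des_flatten (fun q hq => hrs q (List.mem_cons_of_mem r hq)) htail
    have hdescent := headD_lt_getLastD_iff hr hr' (hle _ List.mem_cons_self)
    simp only [List.headD_cons] at hdescent
    have hcount_rest : runType r = 1 → runType (b :: s) ≠ 1 →
        rest.countP (runType · = 1) = 0 := by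
      intro h1 h2
      refine List.countP_eq_zero.mpr fun q hq => ?_
      have := hle _ List.mem_cons_self
      have := (List.pairwise_cons.mp htail).1 q hq
      simp only [decide_eq_true_eq]
      omega
    rw [List.flatten_cons, List.flatten_cons, List.cons_append, des_append_cons hr.ne_nil,
      ← List.cons_append, ← List.flatten_cons, ih, des_eq_zero_of_isChain hr.isChain]
    simp only [List.countP_cons, decide_eq_true_eq]
    split_ifs <;> omega

lemma splitRuns_cons : ∀ (x : ℕ) (l : List ℕ), ∃ t rs, splitRuns (x :: l) = (x :: t) :: rs
  | x, [] => ⟨[], [], rfl⟩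
  | x, y :: l => by
    obtain ⟨t, rs, h⟩ := splitRuns_cons y l
    simp only [splitRuns, h]
    split_ifs
    · exact ⟨y :: t, rs, rfl⟩
    · exact ⟨[], (y :: t) :: rs, rfl⟩

lemma isBinaryRun_of_mem_splitRuns : ∀ {l : List ℕ}, (∀ x ∈ l, x ≤ 1) →
    ∀ r ∈ splitRuns l, IsBinaryRun r
  | [], _ => by simp [splitRuns]
  | [x], hl => by
    simp only [splitRuns, List.mem_singleton, forall_eq]
    exact ⟨List.cons_ne_nil x [], List.isChain_singleton x, by simpa using hl⟩
  | x :: y :: l, hl => by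
    obtain ⟨t, rs, h⟩ := splitRuns_cons y l
    have ih := isBinaryRun_of_mem_splitRuns (l := y :: l) fun z hz => hl z (by simp [hz])
    rw [h] at ih
    have hx : x ≤ 1 := hl x List.mem_cons_self
    have hyt := ih _ List.mem_cons_self
    simp only [splitRuns, h]
    split_ifs with hxy <;> intro r hr <;> simp only [List.mem_cons] at hr
    · rcases hr with rfl | hr
      · refine ⟨List.cons_ne_nil _ _, List.isChain_cons_cons.mpr ⟨hxy, hyt.isChain⟩, ?_⟩
        simpa [hx] using hyt.le_one
      · exact ih r (List.mem_cons_of_mem _ hr)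
    · rcases hr with rfl | hr
      · exact ⟨List.cons_ne_nil x [], List.isChain_singleton x, by simpa using hx⟩
      · exact ih r (List.mem_cons.mpr hr)

lemma asc_eq_countP_splitRuns : ∀ {l : List ℕ}, (∀ x ∈ l, x ≤ 1) →
    asc l = (splitRuns l).countP (runType · = 1)
  | [], _ => rfl
  | [x], hl => by
    have := hl x List.mem_cons_self
    simp only [splitRuns, List.countP_singleton, runType, List.headD_cons, List.getLastD_cons,
      List.getLastD_nil, decide_eq_true_eq]
    split_ifs <;> first | rfl | omega
  | x :: y :: l, hl => by
    obtain ⟨t, rs, h⟩ := splitRuns_cons y l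
    have hyl : ∀ z ∈ y :: l, z ≤ 1 := fun z hz => hl z (List.mem_cons_of_mem x hz)
    have hrun := isBinaryRun_of_mem_splitRuns hyl (y :: t) (by simp [h])
    have hx : x ≤ 1 := hl x List.mem_cons_self
    have hy : y ≤ (y :: t).getLastD 0 := hrun.le_getLastD List.mem_cons_self
    have hlast := hrun.getLastD_le_one
    rw [asc_cons_cons, asc_eq_countP_splitRuns hyl, h]
    simp only [splitRuns, h]
    by_cases hxy : x ≤ y
    · rw [if_pos hxy]
      simp only [List.countP_cons, runType, List.headD_cons, List.getLastD_cons,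
        decide_eq_true_eq] at hy hlast ⊢
      split_ifs <;> omega
    · rw [if_neg hxy]
      simp only [List.countP_cons, runType, List.headD_cons, List.getLastD_cons,
        List.getLastD_nil, decide_eq_true_eq]
      split_ifs <;> omega

lemma des_runsort {l : List ℕ} (hl : ∀ x ∈ l, x ≤ 1) : des (runsort l) = asc l - 1 := by
  have hperm := List.mergeSort_perm (splitRuns l) lexLe
  have hruns : ∀ r ∈ (splitRuns l).mergeSort lexLe, IsBinaryRun r := fun r hr =>
    isBinaryRun_of_mem_splitRuns hl r (hperm.mem_iff.mp hr)
  have hlex := List.pairwise_mergeSort (le := lexLe)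
    (fun a b c hab hbc => by rw [lexLe_eq_true_iff] at *; exact le_trans hab hbc)
    (fun a b => by simpa [lexLe_eq_true_iff] using le_total a b) (splitRuns l)
  have hsorted : ((splitRuns l).mergeSort lexLe).Pairwise (runType · ≤ runType ·) :=
    hlex.imp_of_mem fun hr hr' hle =>
      runType_le_runType (hruns _ hr) (hruns _ hr') ((lexLe_eq_true_iff _ _).mp hle)
  rw [runsort, des_flatten hruns hsorted, hperm.countP_eq, asc_eq_countP_splitRuns hl]

lemma card_filter_piFin_succ {α : Type*} [Fintype α] {n : ℕ} (P : (Fin (n + 1) → α) → Prop)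
    [DecidablePred P] : #{w | P w} = ∑ a, #{w : Fin n → α | P (Fin.cons a w)} := by
  simp only [card_filter]
  rw [← (Fin.consEquiv fun _ => α).sum_comp, Fintype.sum_prod_type]
  rfl

lemma word_cons {n : ℕ} (b : Fin 2) (w : Fin n → Fin 2) :
    word (Fin.cons b w : Fin (n + 1) → Fin 2) = (b : ℕ) :: word w := by
  simp [word, List.ofFn_succ]

lemma word_le_one {n : ℕ} (w : Fin n → Fin 2) : ∀ x ∈ word w, x ≤ 1 := by
  simp only [word, List.mem_ofFn, forall_exists_index, forall_apply_eq_imp_iff]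
  exact fun i => Fin.is_le (w i)

lemma card_asc_cons_word : ∀ (n c : ℕ) {b : ℕ}, b ≤ 1 →
    #{w : Fin n → Fin 2 | asc (b :: word w) = c} = (n + 1).choose (2 * c + b)
  | 0, c, b, hb => by
    have hword (w : Fin 0 → Fin 2) : word w = [] := rfl
    rcases c with _ | c
    · interval_cases b <;> simp [hword, asc]
    · rw [Nat.choose_eq_zero_of_lt (by omega)]
      simp [hword, asc]
  | n + 1, c, b, hb => by
    have ih0 (c : ℕ) := card_asc_cons_word n c zero_le_one
    have ih1 (c : ℕ) := card_asc_cons_word n c le_rfl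
    rw [card_filter_piFin_succ, Fin.sum_univ_two]
    simp only [word_cons, asc_cons_cons, Fin.isValue, Fin.val_zero, Fin.val_one]
    interval_cases b
    · rcases c with _ | c
      · simp [ih0]
      · simp only [ih0, ih1, Nat.lt_irrefl, ↓reduceIte, add_zero, Nat.zero_lt_one,
          Nat.add_right_cancel_iff]
        rw [Nat.mul_succ, Nat.choose_succ_succ' (n + 1) (2 * c + 1), add_comm]
    · simp [ih0, ih1, Nat.choose_succ_succ' (n + 1) (2 * c)]

lemma card_asc_word (n c : ℕ) :
    #{w : Fin n → Fin 2 | asc (word w) = c} = (n + 1).choose (2 * c + 1) := by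
  rw [← card_asc_cons_word n c le_rfl]
  refine congrArg card (filter_congr fun w _ => ?_)
  rcases hw : word w with _ | ⟨y, t⟩
  · rfl
  · have : y ≤ 1 := word_le_one w y (by simp [hw])
    rw [asc_cons_cons, if_neg (by omega), add_zero]

end BinaryRunsort

open BinaryRunsort

/-- The number of binary words of length `n` with exactly `k-1` descents after run-sorting
(`k ≥ 2`) is `C(n,2k)+C(n,2k+1)`, and the number with no descents after run-sorting is
`C(n+1,3)+(n+1)`. -/
theorem stmt17 (n : ℕ) :
    (∀ k : ℕ, 2 ≤ k →
      (Finset.univ.filter fun w : Fin n → Fin 2 =>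
        des (runsort (word w)) = k - 1).card = n.choose (2*k) + n.choose (2*k+1)) ∧
    (Finset.univ.filter fun w : Fin n → Fin 2 =>
      des (runsort (word w)) = 0).card = (n+1).choose 3 + (n+1) := by
  have hdes (w : Fin n → Fin 2) : des (runsort (word w)) = asc (word w) - 1 :=
    des_runsort (word_le_one w)
  refine ⟨fun k hk => ?_, ?_⟩
  · calc #{w : Fin n → Fin 2 | des (runsort (word w)) = k - 1}
        = #{w : Fin n → Fin 2 | asc (word w) = k} :=
          congrArg card (filter_congr fun w _ => by rw [hdes]; omega)
      _ = n.choose (2 * k) + n.choose (2 * k + 1) := by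
          rw [card_asc_word, Nat.choose_succ_succ']
  · calc #{w : Fin n → Fin 2 | des (runsort (word w)) = 0}
        = #{w : Fin n → Fin 2 | asc (word w) = 0} + #{w : Fin n → Fin 2 | asc (word w) = 1} := by
          rw [← card_union_of_disjoint (disjoint_filter.mpr fun _ _ h => by omega), ← filter_or]
          exact congrArg card (filter_congr fun w _ => by rw [hdes]; omega)
      _ = (n + 1).choose 3 + (n + 1) := by
          rw [card_asc_word, card_asc_word, Nat.choose_one_right, add_comm]
end
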